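/- (Proposition 4 of the paper, first part.) Let m, D ≥ 1 and define the normalized matching cost C_m(X,Y) := (1/m)·min over permutations π of Fin m of Σ_{i=1}^m ‖X(i) − Y(π(i))‖² for tuples X, Y : Fin m → ℝ^D. On a probability space Ω, let (A₁, B₁) and (A₂, B₂) be measurable random pairs of tuples valued in (Fin m → ℝ^D) × (Fin m → ℝ^D), such that (A₁, B₁) and (A₂, B₂) are independent and identically distributed, and C_m(A₁, B₁) is integrable. Then E[C_{2m}(A₁∪A₂, B₁∪B₂)] ≤ E[C_m(A₁, B₁)], where A₁∪A₂ denotes the concatenated tuple Fin (2m) → ℝ^D. That is, the expected squared 2-Wasserstein distance between empirical measures of mini-batches of size 2m is at most that for mini-batches of size m. -/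

import Mathlib

/-!
Gluing a matching of `A₁` with `B₁` to one of `A₂` with `B₂` gives a block permutation
of `Fin (2m)`, so pointwise `C_{2m}(A₁ ∪ A₂, B₁ ∪ B₂) ≤ (C_m(A₁, B₁) + C_m(A₂, B₂)) / 2`.
Taking expectations, the two terms on the right have the same mean since `(A₁, B₁)` and
`(A₂, B₂)` are identically distributed.
-/

open MeasureTheory

/-- Normalized optimal matching cost between two equal-size tuples of points:
`(1/m) ·` the minimum over permutations `π` of `Σ_i ‖X i − Y (π i)‖²`; it equals the
squared 2-Wasserstein distance between the uniform empirical measures of `X` and `Y`. -/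
noncomputable def wassCost {m D : ℕ} (X Y : Fin m → EuclideanSpace ℝ (Fin D)) : ℝ :=
  (m : ℝ)⁻¹ * ⨅ π : Equiv.Perm (Fin m), ∑ i, ‖X i - Y (π i)‖ ^ 2

noncomputable def matchingCost {α β : Type*} {m : ℕ} (c : α → β → ℝ) (X : Fin m → α)
    (Y : Fin m → β) : ℝ :=
  ⨅ π : Equiv.Perm (Fin m), ∑ i, c (X i) (Y (π i))

theorem Fin.sum_append_permCongr_sumCongr {M α β : Type*} [AddCommMonoid M] {m n : ℕ}
    (c : α → β → M) (X₁ : Fin m → α) (X₂ : Fin n → α) (Y₁ : Fin m → β) (Y₂ : Fin n → β)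
    (π₁ : Equiv.Perm (Fin m)) (π₂ : Equiv.Perm (Fin n)) :
    ∑ i, c (Fin.append X₁ X₂ i)
        (Fin.append Y₁ Y₂ (finSumFinEquiv.permCongr (π₁.sumCongr π₂) i)) =
      ∑ i, c (X₁ i) (Y₁ (π₁ i)) + ∑ i, c (X₂ i) (Y₂ (π₂ i)) := by
  simp [Fin.sum_univ_add, Equiv.permCongr_apply]

section matchingCost

variable {α β : Type*} {c : α → β → ℝ}

theorem matchingCost_nonneg (hc : ∀ x y, 0 ≤ c x y) {m : ℕ} (X : Fin m → α) (Y : Fin m → β) :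
    0 ≤ matchingCost c X Y :=
  Real.iInf_nonneg fun _ => Finset.sum_nonneg fun _ _ => hc _ _

theorem matchingCost_append_le (hc : ∀ x y, 0 ≤ c x y) {m n : ℕ}
    (X₁ : Fin m → α) (X₂ : Fin n → α) (Y₁ : Fin m → β) (Y₂ : Fin n → β) :
    matchingCost c (Fin.append X₁ X₂) (Fin.append Y₁ Y₂) ≤
      matchingCost c X₁ Y₁ + matchingCost c X₂ Y₂ := by
  have hbdd : BddBelow (Set.range fun σ : Equiv.Perm (Fin (m + n)) =>
      ∑ i, c (Fin.append X₁ X₂ i) (Fin.append Y₁ Y₂ (σ i))) :=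
    ⟨0, by rintro _ ⟨σ, rfl⟩; exact Finset.sum_nonneg fun _ _ => hc _ _⟩
  exact le_ciInf_add_ciInf fun π₁ π₂ =>
    (ciInf_le hbdd (finSumFinEquiv.permCongr (π₁.sumCongr π₂))).trans_eq
      (Fin.sum_append_permCongr_sumCongr c X₁ X₂ Y₁ Y₂ π₁ π₂)

end matchingCost

section wassCost

variable {m D : ℕ}

theorem wassCost_eq_inv_mul_matchingCost (X Y : Fin m → EuclideanSpace ℝ (Fin D)) :
    wassCost X Y = (m : ℝ)⁻¹ * matchingCost (fun x y => ‖x - y‖ ^ 2) X Y :=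
  rfl

theorem wassCost_nonneg (X Y : Fin m → EuclideanSpace ℝ (Fin D)) : 0 ≤ wassCost X Y :=
  mul_nonneg (by positivity)
    (matchingCost_nonneg (c := fun x y : EuclideanSpace ℝ (Fin D) => ‖x - y‖ ^ 2)
      (fun _ _ => by positivity) X Y)

theorem wassCost_append_le (X₁ X₂ Y₁ Y₂ : Fin m → EuclideanSpace ℝ (Fin D)) :
    wassCost (Fin.append X₁ X₂) (Fin.append Y₁ Y₂) ≤
      (wassCost X₁ Y₁ + wassCost X₂ Y₂) / 2 := by
  simp only [wassCost_eq_inv_mul_matchingCost]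
  calc ((m + m : ℕ) : ℝ)⁻¹ * matchingCost _ (Fin.append X₁ X₂) (Fin.append Y₁ Y₂)
      ≤ ((m + m : ℕ) : ℝ)⁻¹ * (matchingCost (fun x y => ‖x - y‖ ^ 2) X₁ Y₁ +
          matchingCost (fun x y => ‖x - y‖ ^ 2) X₂ Y₂) :=
        mul_le_mul_of_nonneg_left
          (matchingCost_append_le (fun _ _ => by positivity) X₁ X₂ Y₁ Y₂) (by positivity)
    _ = _ := by
        push_cast
        rw [← two_mul, mul_inv]
        ring

theorem measurable_wassCost :
    Measurable fun p : (Fin m → EuclideanSpace ℝ (Fin D)) ×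
        (Fin m → EuclideanSpace ℝ (Fin D)) => wassCost p.1 p.2 := by
  unfold wassCost
  fun_prop

end wassCost

theorem expected_wassCost_double_batch_le_general (m D : ℕ)
    {Ω : Type*} [MeasurableSpace Ω] (ℙ : Measure Ω)
    (P₁ P₂ : Ω → (Fin m → EuclideanSpace ℝ (Fin D)) × (Fin m → EuclideanSpace ℝ (Fin D)))
    (hid : ProbabilityTheory.IdentDistrib P₁ P₂ ℙ ℙ)
    (hint : Integrable (fun ω => wassCost (P₁ ω).1 (P₁ ω).2) ℙ) :
    ∫ ω, wassCost (Fin.append (P₁ ω).1 (P₂ ω).1) (Fin.append (P₁ ω).2 (P₂ ω).2) ∂ℙ ≤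
      ∫ ω, wassCost (P₁ ω).1 (P₁ ω).2 ∂ℙ := by
  have hid' : ProbabilityTheory.IdentDistrib (fun ω => wassCost (P₁ ω).1 (P₁ ω).2)
      (fun ω => wassCost (P₂ ω).1 (P₂ ω).2) ℙ ℙ :=
    hid.comp measurable_wassCost
  have hint₂ := hid'.integrable_iff.mp hint
  calc ∫ ω, wassCost (Fin.append (P₁ ω).1 (P₂ ω).1) (Fin.append (P₁ ω).2 (P₂ ω).2) ∂ℙ
      ≤ ∫ ω, (wassCost (P₁ ω).1 (P₁ ω).2 + wassCost (P₂ ω).1 (P₂ ω).2) / 2 ∂ℙ :=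
        integral_mono_of_nonneg (ae_of_all _ fun _ => wassCost_nonneg _ _)
          ((hint.add hint₂).div_const 2) (ae_of_all _ fun _ => wassCost_append_le _ _ _ _)
    _ = ∫ ω, wassCost (P₁ ω).1 (P₁ ω).2 ∂ℙ := by
        rw [integral_div, integral_add hint hint₂, ← hid'.integral_eq]
        ring

/-- Proposition 4 (first part): the expected squared 2-Wasserstein distance between
empirical measures of mini-batches of size `2m` (obtained by concatenating two i.i.d.
mini-batch pairs of size `m`) is at most that for mini-batches of size `m`. -/
theorem expected_wassCost_double_batch_le (m D : ℕ) (hm : 1 ≤ m) (hD : 1 ≤ D)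
    {Ω : Type*} [MeasurableSpace Ω] (ℙ : Measure Ω) [IsProbabilityMeasure ℙ]
    (P₁ P₂ : Ω → (Fin m → EuclideanSpace ℝ (Fin D)) × (Fin m → EuclideanSpace ℝ (Fin D)))
    (hP₁ : Measurable P₁) (hP₂ : Measurable P₂)
    (hindep : ProbabilityTheory.IndepFun P₁ P₂ ℙ)
    (hid : ProbabilityTheory.IdentDistrib P₁ P₂ ℙ ℙ)
    (hint : Integrable (fun ω => wassCost (P₁ ω).1 (P₁ ω).2) ℙ) :
    ∫ ω, wassCost (Fin.append (P₁ ω).1 (P₂ ω).1) (Fin.append (P₁ ω).2 (P₂ ω).2) ∂ℙ ≤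
      ∫ ω, wassCost (P₁ ω).1 (P₁ ω).2 ∂ℙ :=
  expected_wassCost_double_batch_le_general m D ℙ P₁ P₂ hid hint
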